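/- MinPop matching computes MaxMatch: let ␣ be a character not occurring in any vocabulary token, and extend the 'on-trie' predicate so that exactly the strings ε and ␣ among strings ending in ␣ are on the trie. Then for every string w over the original alphabet, M(w) = [UNK] if g(w␣) = none, and M(w) = G(w␣) otherwise. -/

import Mathlib

/-!
Since `␣` occurs in no token, appending it to `w` changes neither `p_w` nor `q_w␣ = q_w ␣`, and
`w␣` is on the augmented trie only for `w = ε`. Hence MinPop on `w␣` pops exactly the tokens
MaxMatch produces on `w`, fails exactly when MaxMatch hits a suffix with no token prefix, and
otherwise stops at the node `␣`, which it reaches precisely when MaxMatch has consumed all of `w`.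
-/

variable {α : Type*} [DecidableEq α]

/-- The longest nonempty prefix of `w` that belongs to `V` (or `[]` if none exists). -/
def maxPref (V : Finset (List α)) (w : List α) : List α :=
  ((w.inits.filter (fun p => decide (p ∈ V ∧ p ≠ []))).getLast?).getD []

/-- The suffix `q_w` of `w` obtained by removing the prefix `p_w`. -/
def restSuffix (V : Finset (List α)) (w : List α) : List α :=
  w.drop (maxPref V w).length

/-- MaxMatch tokenization; `none` encodes the failure output `[UNK]`. -/
def maxMatch (V : Finset (List α)) (w : List α) : Option (List (List α)) :=
  if hw : w = [] then some []
  else if hp : maxPref V w = [] then none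
  else
    match maxMatch V (w.drop (maxPref V w).length) with
    | none => none
    | some ts => some (maxPref V w :: ts)
  termination_by w.length
  decreasing_by
    simp only [List.length_drop]
    have h1 : 0 < (maxPref V w).length := List.length_pos_iff_ne_nil.mpr hp
    have h2 : 0 < w.length := List.length_pos_iff_ne_nil.mpr hw
    omega

/-- `w` is "on the trie" built from `V`: it is `ε` or a prefix of a vocabulary token. -/
def OnTrie (V : Finset (List α)) (w : List α) : Prop :=
  w = [] ∨ ∃ t ∈ V, w <+: t

instance (V : Finset (List α)) (w : List α) : Decidable (OnTrie V w) := by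
  unfold OnTrie; infer_instance

/-- MinPop matching: `(g w, G w)`. -/
def minPop (V : Finset (List α)) (w : List α) : Option (List α) × List (List α) :=
  if hT : OnTrie V w then (some w, [])
  else if hp : maxPref V w = [] then (none, [])
  else
    let r := minPop V (w.drop (maxPref V w).length)
    (r.1, maxPref V w :: r.2)
  termination_by w.length
  decreasing_by
    simp only [List.length_drop]
    have hw : w ≠ [] := fun h => hT (Or.inl h)
    have h1 : 0 < (maxPref V w).length := List.length_pos_iff_ne_nil.mpr hp
    have h2 : 0 < w.length := List.length_pos_iff_ne_nil.mpr hw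
    omega

/-- Failure link `f(u)`. -/
def fLink (V : Finset (List α)) (u : List α) : Option (List α) :=
  if maxPref V u = [] then none else (minPop V (restSuffix V u)).1

/-- Failure pops `F(u)`. -/
def fPops (V : Finset (List α)) (u : List α) : List (List α) :=
  if maxPref V u = [] then [] else maxPref V u :: (minPop V (restSuffix V u)).2

/-- `w` is on the trie augmented with a fresh whitespace character `sp`:
exactly `ε`, `[sp]`, and the prefixes of vocabulary tokens are on it. -/
def OnTrieAug (V : Finset (List α)) (sp : α) (w : List α) : Prop :=
  w = [] ∨ w = [sp] ∨ ∃ t ∈ V, w <+: t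

instance (V : Finset (List α)) (sp : α) (w : List α) : Decidable (OnTrieAug V sp w) := by
  unfold OnTrieAug; infer_instance

/-- MinPop matching on the augmented trie: `(g w, G w)`. -/
def minPopAug (V : Finset (List α)) (sp : α) (w : List α) :
    Option (List α) × List (List α) :=
  if hT : OnTrieAug V sp w then (some w, [])
  else if hp : maxPref V w = [] then (none, [])
  else
    let r := minPopAug V sp (w.drop (maxPref V w).length)
    (r.1, maxPref V w :: r.2)
  termination_by w.length
  decreasing_by
    simp only [List.length_drop]
    have hw : w ≠ [] := fun h => hT (Or.inl h)
    have h1 : 0 < (maxPref V w).length := List.length_pos_iff_ne_nil.mpr hp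
    have h2 : 0 < w.length := List.length_pos_iff_ne_nil.mpr hw
    omega

section Recursions

variable {V : Finset (List α)} {w : List α}

lemma maxPref_mem_filter (h : maxPref V w ≠ []) :
    maxPref V w ∈ w.inits.filter (fun p => decide (p ∈ V ∧ p ≠ [])) := by
  unfold maxPref at h ⊢
  cases hl : (w.inits.filter (fun p => decide (p ∈ V ∧ p ≠ []))).getLast? with
  | none => rw [hl] at h; exact absurd rfl h
  | some p => exact List.mem_of_getLast? hl

lemma maxPref_prefix (V : Finset (List α)) (w : List α) : maxPref V w <+: w := by
  by_cases h : maxPref V w = []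
  · rw [h]; exact List.nil_prefix
  · exact (List.mem_inits _ _).mp (List.mem_filter.mp (maxPref_mem_filter h)).1

lemma maxPref_append_singleton_of_not_mem {a : α} (h : w ++ [a] ∉ V) :
    maxPref V (w ++ [a]) = maxPref V w := by
  have hinits : (w ++ [a]).inits = w.inits ++ [w ++ [a]] := by
    rw [List.inits_append]; simp
  simp [maxPref, hinits, List.filter_append, h]

lemma length_restSuffix_lt (hw : w ≠ []) (hp : maxPref V w ≠ []) :
    (restSuffix V w).length < w.length := by
  have h1 := List.length_pos_iff_ne_nil.mpr hp
  have h2 := List.length_pos_iff_ne_nil.mpr hw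
  simp only [restSuffix, List.length_drop]
  omega

lemma restSuffix_append_singleton {a : α} (h : maxPref V (w ++ [a]) = maxPref V w) :
    restSuffix V (w ++ [a]) = restSuffix V w ++ [a] := by
  rw [restSuffix, restSuffix, h, List.drop_append_of_le_length (maxPref_prefix V w).length_le]

lemma maxMatch_of_maxPref_eq_nil (hw : w ≠ []) (hp : maxPref V w = []) :
    maxMatch V w = none := by
  rw [maxMatch, dif_neg hw, dif_pos hp]

lemma maxMatch_of_maxPref_ne_nil (hw : w ≠ []) (hp : maxPref V w ≠ []) :
    maxMatch V w = (maxMatch V (restSuffix V w)).map (maxPref V w :: ·) := by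
  rw [maxMatch, dif_neg hw, dif_neg hp, restSuffix]
  cases maxMatch V (w.drop (maxPref V w).length) <;> rfl

lemma minPopAug_of_onTrieAug {sp : α} (hT : OnTrieAug V sp w) :
    minPopAug V sp w = (some w, []) := by
  rw [minPopAug, dif_pos hT]

lemma minPopAug_of_maxPref_eq_nil {sp : α} (hT : ¬OnTrieAug V sp w) (hp : maxPref V w = []) :
    minPopAug V sp w = (none, []) := by
  rw [minPopAug, dif_neg hT, dif_pos hp]

lemma minPopAug_of_maxPref_ne_nil {sp : α} (hT : ¬OnTrieAug V sp w) (hp : maxPref V w ≠ []) :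
    minPopAug V sp w =
      ((minPopAug V sp (restSuffix V w)).1, maxPref V w :: (minPopAug V sp (restSuffix V w)).2) := by
  rw [minPopAug, dif_neg hT, dif_neg hp, restSuffix]

end Recursions

section FreshSeparator

variable {V : Finset (List α)} {sp : α}

lemma maxPref_append_sp (hsp : ∀ t ∈ V, sp ∉ t) (w : List α) :
    maxPref V (w ++ [sp]) = maxPref V w :=
  maxPref_append_singleton_of_not_mem fun h => hsp _ h (by simp)

theorem maxMatch_eq_map_minPopAug (hsp : ∀ t ∈ V, sp ∉ t) (w : List α) :
    maxMatch V w = (minPopAug V sp (w ++ [sp])).1.map fun _ => (minPopAug V sp (w ++ [sp])).2 := by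
  rcases eq_or_ne w [] with rfl | hw
  · rw [List.nil_append, minPopAug_of_onTrieAug (Or.inr (Or.inl rfl)), maxMatch, dif_pos rfl]
    rfl
  have hT : ¬OnTrieAug V sp (w ++ [sp]) := by
    rintro (h | h | ⟨t, ht, hpre⟩)
    · simp at h
    · simp [hw] at h
    · exact hsp t ht (hpre.mem (by simp))
  have hpsp := maxPref_append_sp hsp w
  by_cases hp : maxPref V w = []
  · rw [maxMatch_of_maxPref_eq_nil hw hp, minPopAug_of_maxPref_eq_nil hT (hpsp.trans hp)]
    rfl
  · have := length_restSuffix_lt hw hp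
    rw [maxMatch_of_maxPref_ne_nil hw hp, minPopAug_of_maxPref_ne_nil hT (hpsp ▸ hp),
      restSuffix_append_singleton hpsp, hpsp, maxMatch_eq_map_minPopAug hsp (restSuffix V w)]
    cases (minPopAug V sp (restSuffix V w ++ [sp])).1 <;> rfl
termination_by w.length

end FreshSeparator

theorem stmt9_general (V : Finset (List α))
    (sp : α) (hsp : ∀ t ∈ V, sp ∉ t) (w : List α) :
    ((minPopAug V sp (w ++ [sp])).1 = none → maxMatch V w = none) ∧
    (∀ u, (minPopAug V sp (w ++ [sp])).1 = some u →
      maxMatch V w = some (minPopAug V sp (w ++ [sp])).2) := by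
  rw [maxMatch_eq_map_minPopAug hsp w]
  exact ⟨fun h => by rw [h]; rfl, fun u h => by rw [h]; rfl⟩

/-- MinPop matching on the augmented trie computes MaxMatch:
`M(w) = [UNK]` if `g(w␣) = none`, and `M(w) = G(w␣)` otherwise. -/
theorem stmt9 (V : Finset (List α)) (hV : ∀ t ∈ V, t ≠ [])
    (sp : α) (hsp : ∀ t ∈ V, sp ∉ t) (w : List α) (hw : sp ∉ w) :
    ((minPopAug V sp (w ++ [sp])).1 = none → maxMatch V w = none) ∧
    (∀ u, (minPopAug V sp (w ++ [sp])).1 = some u →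
      maxMatch V w = some (minPopAug V sp (w ++ [sp])).2) :=
  stmt9_general V sp hsp w
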